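/- Let ρ_AB = ρ_A ⊗ ρ_B be a product density operator on H_A ⊗ H_B. Then H_max(A|B)_ρ = 2 log₂ tr(√ρ_A), i.e., the conditional max-entropy of a product state equals the Rényi entropy of order 1/2 of ρ_A. -/

import Mathlib

open Matrix
open scoped Kronecker ComplexConjugate ComplexOrder

noncomputable section

/-- Partial trace over the first (A) subsystem. -/
def ptraceA {A B : Type*} [Fintype A] (M : Matrix (A × B) (A × B) ℂ) :
    Matrix B B ℂ :=
  Matrix.of fun i j => ∑ a : A, M (a, i) (a, j)

/-- Partial trace over the second (B) subsystem. -/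
def ptraceB {A B : Type*} [Fintype B] (M : Matrix (A × B) (A × B) ℂ) :
    Matrix A A ℂ :=
  Matrix.of fun i j => ∑ b : B, M (i, b) (j, b)

/-- A density operator: positive semidefinite with unit trace. -/
def IsDensity {n : Type*} [Fintype n] (ρ : Matrix n n ℂ) : Prop :=
  ρ.PosSemidef ∧ ρ.trace = 1

/-- Conditional min-entropy `H_min(A|B)_ρ = - inf_σ D_∞(ρ ‖ id_A ⊗ σ)`, where the
infimum ranges over density operators `σ` on `B` and
`D_∞(τ‖τ') = inf {λ | τ ≤ 2^λ τ'}`. -/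
def Hmin {A B : Type*} [Fintype A] [Fintype B] [DecidableEq A] [DecidableEq B]
    (ρ : Matrix (A × B) (A × B) ℂ) : ℝ :=
  - sInf {l : ℝ | ∃ σ : Matrix B B ℂ, IsDensity σ ∧
      (((2 : ℝ) ^ l : ℝ) • ((1 : Matrix A A ℂ) ⊗ₖ σ) - ρ).PosSemidef}

open scoped Classical in
/-- Positive semidefinite square root (junk value `0` off the PSD cone). -/
def psqrt {n : Type*} [Fintype n] [DecidableEq n] (M : Matrix n n ℂ) : Matrix n n ℂ :=
  if h : M.PosSemidef then
    (h.1.eigenvectorUnitary : Matrix n n ℂ) *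
      diagonal ((↑) ∘ Real.sqrt ∘ h.1.eigenvalues) *
      (star h.1.eigenvectorUnitary : Matrix n n ℂ)
  else 0

/-- Trace norm `‖M‖₁ = tr √(Mᴴ M)`. -/
def traceNorm {n : Type*} [Fintype n] [DecidableEq n] (M : Matrix n n ℂ) : ℝ :=
  (psqrt (Mᴴ * M)).trace.re

/-- Fidelity `F(ρ,σ) = ‖√ρ √σ‖₁`. -/
def fidelity {n : Type*} [Fintype n] [DecidableEq n] (ρ σ : Matrix n n ℂ) : ℝ :=
  traceNorm (psqrt ρ * psqrt σ)

/-- Choi matrix of a linear map on matrices. -/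
def choi {B A' : Type*} [Fintype B] [DecidableEq B] [Fintype A']
    (F : Matrix B B ℂ →ₗ[ℂ] Matrix A' A' ℂ) : Matrix (B × A') (B × A') ℂ :=
  Matrix.of fun p q => (F (Matrix.single p.1 q.1 1)) p.2 q.2

/-- A quantum operation (CPTP map): completely positive (PSD Choi matrix, by Choi's
theorem) and trace-preserving. -/
def IsCPTP {B A' : Type*} [Fintype B] [DecidableEq B] [Fintype A']
    (F : Matrix B B ℂ →ₗ[ℂ] Matrix A' A' ℂ) : Prop :=
  (choi F).PosSemidef ∧ ∀ M : Matrix B B ℂ, (F M).trace = M.trace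

/-- The map `id_A ⊗ F` applied to a bipartite operator. -/
def idTensor {A B A' : Type*} [Fintype B]
    (F : Matrix B B ℂ →ₗ[ℂ] Matrix A' A' ℂ) (ρ : Matrix (A × B) (A × B) ℂ) :
    Matrix (A × A') (A × A') ℂ :=
  Matrix.of fun p q => (F (Matrix.of fun b b' => ρ (p.1, b) (q.1, b'))) p.2 q.2

/-- The quadratic form `⟨ψ|M|ψ⟩` (real part). -/
def pureOverlap {n : Type*} [Fintype n] (ψ : n → ℂ) (M : Matrix n n ℂ) : ℝ :=
  (∑ p, ∑ q, conj (ψ p) * M p q * ψ q).re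

/-- The maximally entangled state `|Φ⟩ = d^{-1/2} ∑ₓ |x⟩|x⟩`. -/
def maxEnt (A : Type*) [Fintype A] [DecidableEq A] : A × A → ℂ :=
  fun p => if p.1 = p.2 then ((Real.sqrt (Fintype.card A))⁻¹ : ℝ) else 0

/-- `q_corr(A|B)_ρ`: `d_A` times the maximal squared fidelity with the maximally
entangled state achievable by quantum operations on `B`. -/
def qcorr {A B : Type*} [Fintype A] [Fintype B] [DecidableEq A] [DecidableEq B]
    (ρ : Matrix (A × B) (A × B) ℂ) : ℝ :=
  (Fintype.card A : ℝ) *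
    sSup {x : ℝ | ∃ F : Matrix B B ℂ →ₗ[ℂ] Matrix A A ℂ, IsCPTP F ∧
      x = pureOverlap (maxEnt A) (idTensor F ρ)}

/-- The completely mixed state. -/
def mixed (A : Type*) [Fintype A] [DecidableEq A] : Matrix A A ℂ :=
  ((Fintype.card A : ℂ)⁻¹) • (1 : Matrix A A ℂ)

/-- `q_decpl(A|B)_ρ`: `d_A` times the maximal squared fidelity with `τ_A ⊗ σ_B`. -/
def qdecpl {A B : Type*} [Fintype A] [Fintype B] [DecidableEq A] [DecidableEq B]
    (ρ : Matrix (A × B) (A × B) ℂ) : ℝ :=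
  (Fintype.card A : ℝ) *
    sSup {x : ℝ | ∃ σ : Matrix B B ℂ, IsDensity σ ∧
      x = (fidelity ρ ((mixed A) ⊗ₖ σ)) ^ 2}

/-- Reduced state `tr_C |ψ⟩⟨ψ|` of a pure state `ψ` on `(A ⊗ B) ⊗ C`. -/
def redL {S C : Type*} [Fintype C] (ψ : S × C → ℂ) : Matrix S S ℂ :=
  Matrix.of fun s s' => ∑ c, ψ (s, c) * conj (ψ (s', c))

/-- Reduced state `tr_B |ψ⟩⟨ψ|` on `A ⊗ C` of a pure state `ψ` on `(A ⊗ B) ⊗ C`. -/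
def redAC {A B C : Type*} [Fintype B] (ψ : (A × B) × C → ℂ) :
    Matrix (A × C) (A × C) ℂ :=
  Matrix.of fun p q => ∑ b, ψ ((p.1, b), p.2) * conj (ψ ((q.1, b), q.2))

/-!
Diagonalise `ρ_A = U diag(p) U†` and `ρ_B = V diag(q) V†`. Rotating the purification by `U ⊗ V`
gives a matrix `G` whose rows `g_ab ∈ ℂ^C` are orthogonal with `‖g_ab‖² = p_a q_b`. In `ρ_AC` the
rotation `V` cancels and `U` only conjugates, which leaves `H_min(A|C)` unchanged, so we may take
`ρ_AC = ∑_b |Φ_b⟩⟨Φ_b|` with `Φ_b = ∑_a |a⟩|g_ab⟩`. Put `t = ∑_a √p_a = tr √ρ_A`.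

* The state `σ = t⁻¹ ∑_{a,b} p_a^{-1/2} |g_ab⟩⟨g_ab|` satisfies `ρ_AC ≤ t² (1 ⊗ σ)`, by the
  Cauchy–Schwarz inequality `|∑_a z_a|² ≤ t ∑_a |z_a|² / √p_a`.
* Conversely, if `ρ_AC ≤ λ (1 ⊗ σ)`, compressing with the vectors `∑_a |a⟩|ĝ_ab⟩` (`ĝ` the
  normalised rows) gives `t² ≤ λ ∑_{a,b} ⟨ĝ_ab|σ|ĝ_ab⟩ ≤ λ tr σ = λ`, by Bessel's inequality.

So the optimal `λ` is `t²`, i.e. `H_max(A|B) = -H_min(A|C) = log₂ t²`.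
-/

namespace Matrix

variable {m n 𝕜 : Type*} [Fintype n] [RCLike 𝕜]

theorem eq_zero_of_mul_conjTranspose_self_apply_eq_zero {G : Matrix m n 𝕜} {k : m}
    (h : (G * Gᴴ) k k = 0) : G k = 0 :=
  dotProduct_self_star_eq_zero.mp h

theorem posSemidef_one_sub_conjTranspose_mul_self [Fintype m] [DecidableEq m] [DecidableEq n]
    {K : Matrix m n 𝕜} (hK : (1 - K * Kᴴ).PosSemidef) : (1 - Kᴴ * K).PosSemidef := by
  have key : 1 - Kᴴ * K = (1 - Kᴴ * K)ᴴ * (1 - Kᴴ * K) + Kᴴ * (1 - K * Kᴴ) * K := by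
    simp only [conjTranspose_sub, conjTranspose_one, conjTranspose_mul,
      conjTranspose_conjTranspose, Matrix.mul_sub, Matrix.sub_mul, Matrix.mul_one,
      Matrix.one_mul, Matrix.mul_assoc]
    abel
  rw [key]
  exact (posSemidef_conjTranspose_mul_self _).add (hK.conjTranspose_mul_mul_same K)

open scoped MatrixOrder in
theorem trace_mul_mul_conjTranspose_le_trace [Fintype m] [DecidableEq n] {K : Matrix m n 𝕜}
    (hK : (1 - Kᴴ * K).PosSemidef) {σ : Matrix n n 𝕜} (hσ : σ.PosSemidef) :
    (K * σ * Kᴴ).trace ≤ σ.trace := by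
  obtain ⟨N, rfl⟩ := CStarAlgebra.nonneg_iff_eq_star_mul_self.mp hσ.nonneg
  rw [star_eq_conjTranspose]
  have hcycle : (K * (Nᴴ * N) * Kᴴ).trace = (N * (Kᴴ * K) * Nᴴ).trace :=
    calc (K * (Nᴴ * N) * Kᴴ).trace = (K * Nᴴ * (N * Kᴴ)).trace := by simp only [Matrix.mul_assoc]
      _ = (N * Kᴴ * (K * Nᴴ)).trace := trace_mul_comm _ _
      _ = _ := by simp only [Matrix.mul_assoc]
  have h := (hK.mul_mul_conjTranspose_same N).trace_nonneg
  rwa [Matrix.mul_sub, Matrix.sub_mul, Matrix.mul_one, trace_sub, ← hcycle,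
    trace_mul_comm N, sub_nonneg] at h

theorem star_dotProduct_self_eq_sum_norm_sq (v : n → 𝕜) :
    star v ⬝ᵥ v = ((∑ i, ‖v i‖ ^ 2 : ℝ) : 𝕜) := by
  simp [dotProduct, RCLike.conj_mul]

theorem dotProduct_mul_conjTranspose_mulVec [Fintype m] (M : Matrix n m 𝕜) (x : n → 𝕜) :
    star x ⬝ᵥ ((M * Mᴴ) *ᵥ x) = star (Mᴴ *ᵥ x) ⬝ᵥ (Mᴴ *ᵥ x) := by
  rw [← mulVec_mulVec, dotProduct_mulVec, star_mulVec, conjTranspose_conjTranspose]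

theorem dotProduct_vecMulVec_star_mulVec (g x : n → 𝕜) :
    star x ⬝ᵥ (vecMulVec g (star g) *ᵥ x) = ((‖star g ⬝ᵥ x‖ ^ 2 : ℝ) : 𝕜) := by
  rw [vecMulVec_mulVec, op_smul_eq_smul, dotProduct_smul, smul_eq_mul, star_dotProduct,
    RCLike.star_def, RCLike.conj_mul, RCLike.norm_conj]
  norm_cast

theorem dotProduct_one_kronecker_mulVec [Fintype m] [DecidableEq m] (σ : Matrix n n 𝕜)
    (x : m × n → 𝕜) :
    star x ⬝ᵥ (((1 : Matrix m m 𝕜) ⊗ₖ σ) *ᵥ x) =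
      ∑ a, star (fun j => x (a, j)) ⬝ᵥ (σ *ᵥ fun j => x (a, j)) := by
  simp [dotProduct, mulVec, Fintype.sum_prod_type, one_apply, ite_mul, Finset.sum_ite_eq]

theorem IsHermitian.conjTranspose_eigenvectorUnitary_mul_mul [DecidableEq n] {M : Matrix n n 𝕜}
    (hM : M.IsHermitian) :
    (hM.eigenvectorUnitary : Matrix n n 𝕜)ᴴ * M * (hM.eigenvectorUnitary : Matrix n n 𝕜) =
      diagonal (RCLike.ofReal ∘ hM.eigenvalues) := by
  simpa [Unitary.conjStarAlgAut_star_apply, star_eq_conjTranspose] using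
    hM.conjStarAlgAut_star_eigenvectorUnitary

end Matrix

theorem norm_sum_sq_le_sum_mul_sum_sq_div {ι E : Type*} [SeminormedAddCommGroup E]
    (s : Finset ι) (w : ι → ℝ) (z : ι → E) (hw : ∀ i ∈ s, 0 ≤ w i)
    (hz : ∀ i ∈ s, w i = 0 → z i = 0) :
    ‖∑ i ∈ s, z i‖ ^ 2 ≤ (∑ i ∈ s, w i) * ∑ i ∈ s, ‖z i‖ ^ 2 / w i := by
  refine (pow_le_pow_left₀ (norm_nonneg _) (norm_sum_le s z) 2).trans ?_
  refine Finset.sum_sq_le_sum_mul_sum_of_sq_le_mul s hw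
    (fun i hi => div_nonneg (sq_nonneg _) (hw i hi)) fun i hi => ?_
  rcases eq_or_ne (w i) 0 with h | h
  · simp [hz i hi h]
  · rw [mul_div_cancel₀ _ h]

namespace IsDensity

variable {n : Type*} [Fintype n] [DecidableEq n] {ρ : Matrix n n ℂ}

theorem sum_eigenvalues (h : IsDensity ρ) : ∑ i, h.1.1.eigenvalues i = 1 := by
  have htr := h.2
  rw [h.1.1.trace_eq_sum_eigenvalues] at htr
  simpa using congrArg Complex.re htr

theorem sum_sqrt_eigenvalues_pos (h : IsDensity ρ) : 0 < ∑ i, √(h.1.1.eigenvalues i) := by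
  obtain ⟨i, -, hi⟩ := Finset.exists_lt_of_sum_lt (f := 0) (s := Finset.univ)
    (g := h.1.1.eigenvalues) (by simp [h.sum_eigenvalues])
  exact Finset.sum_pos' (fun i _ => Real.sqrt_nonneg _) ⟨i, Finset.mem_univ _, Real.sqrt_pos.mpr hi⟩

end IsDensity

theorem re_trace_psqrt {n : Type*} [Fintype n] [DecidableEq n] {M : Matrix n n ℂ}
    (h : M.PosSemidef) : (psqrt M).trace.re = ∑ i, √(h.1.eigenvalues i) := by
  rw [psqrt, dif_pos h, trace_mul_cycle, UnitaryGroup.star_mul_self, Matrix.one_mul,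
    trace_diagonal]
  simp

section ptraceA

variable {A B : Type*} [Fintype A]

theorem trace_ptraceA [Fintype B] (M : Matrix (A × B) (A × B) ℂ) :
    (ptraceA M).trace = M.trace := by
  simp [ptraceA, trace, Fintype.sum_prod_type, Finset.sum_comm (γ := A)]

theorem ptraceA_diagonal [DecidableEq A] [DecidableEq B] (d : A × B → ℂ) :
    ptraceA (diagonal d) = diagonal fun b => ∑ a, d (a, b) := by
  ext b b'
  by_cases h : b = b' <;> simp [ptraceA, diagonal_apply, h]

end ptraceA

def regroupAC {A B C α : Type*} (Ψ : Matrix (A × B) C α) : Matrix (A × C) B α :=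
  of fun i b => Ψ (i.1, b) i.2

section regroupAC

variable {A B C R : Type*}

theorem redL_eq_mul_conjTranspose [Fintype C] (ψ : (A × B) × C → ℂ) :
    redL ψ = of (Function.curry ψ) * (of (Function.curry ψ))ᴴ := by
  ext s s'
  simp [redL, mul_apply]

theorem redAC_eq_regroupAC_mul_conjTranspose [Fintype B] (ψ : (A × B) × C → ℂ) :
    redAC ψ = regroupAC (of (Function.curry ψ)) * (regroupAC (of (Function.curry ψ)))ᴴ := by
  ext i j
  simp [redAC, regroupAC, mul_apply]

theorem conjTranspose_regroupAC_mul_regroupAC [Fintype A] [Fintype C]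
    (F G : Matrix (A × B) C ℂ) : (regroupAC F)ᴴ * regroupAC G = (ptraceA (G * Fᴴ))ᵀ := by
  ext b b'
  simp [regroupAC, ptraceA, mul_apply, Fintype.sum_prod_type, mul_comm]

theorem conjTranspose_regroupAC_mulVec [Fintype A] [Fintype C] (G : Matrix (A × B) C ℂ)
    (x : A × C → ℂ) :
    (regroupAC G)ᴴ *ᵥ x = fun b => ∑ a, star (G (a, b)) ⬝ᵥ fun γ => x (a, γ) := by
  ext b
  simp [regroupAC, mulVec, dotProduct, Fintype.sum_prod_type]

variable [CommSemiring R]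

theorem regroupAC_mul [Fintype A] [Fintype C] [DecidableEq A] (G : Matrix (A × B) C R)
    (σ : Matrix C C R) : regroupAC (G * σ) = ((1 : Matrix A A R) ⊗ₖ σᵀ) * regroupAC G := by
  ext i b
  simp [regroupAC, mul_apply, Fintype.sum_prod_type, one_apply, mul_comm]

theorem regroupAC_kronecker_one_mul [Fintype A] [Fintype B] [Fintype C] [DecidableEq B]
    [DecidableEq C] (U : Matrix A A R) (G : Matrix (A × B) C R) :
    regroupAC ((U ⊗ₖ (1 : Matrix B B R)) * G) = (U ⊗ₖ (1 : Matrix C C R)) * regroupAC G := by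
  ext i b
  simp [regroupAC, mul_apply, Fintype.sum_prod_type, one_apply]

theorem regroupAC_one_kronecker_mul [Fintype A] [Fintype B] [DecidableEq A] (V : Matrix B B R)
    (G : Matrix (A × B) C R) : regroupAC (((1 : Matrix A A R) ⊗ₖ V) * G) = regroupAC G * Vᵀ := by
  ext i b
  simp [regroupAC, mul_apply, Fintype.sum_prod_type, one_apply, mul_comm]

theorem regroupAC_kronecker_mul [Fintype A] [Fintype B] [Fintype C] [DecidableEq A]
    [DecidableEq B] [DecidableEq C] (U : Matrix A A R) (V : Matrix B B R)
    (G : Matrix (A × B) C R) :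
    regroupAC ((U ⊗ₖ V) * G) = (U ⊗ₖ (1 : Matrix C C R)) * regroupAC G * Vᵀ := by
  have hsplit : U ⊗ₖ V = (U ⊗ₖ (1 : Matrix B B R)) * ((1 : Matrix A A R) ⊗ₖ V) := by
    rw [← mul_kronecker_mul, Matrix.mul_one, Matrix.one_mul]
  rw [hsplit, Matrix.mul_assoc, regroupAC_kronecker_one_mul, regroupAC_one_kronecker_mul,
    Matrix.mul_assoc]

end regroupAC

theorem exists_redAC_eq_of_redL_eq_kronecker {A B C : Type*} [Fintype A] [Fintype B] [Fintype C]
    [DecidableEq A] [DecidableEq B] [DecidableEq C] {ρA : Matrix A A ℂ} {ρB : Matrix B B ℂ}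
    (hA : ρA.IsHermitian) (hB : ρB.IsHermitian) {ψ : (A × B) × C → ℂ}
    (hψ : redL ψ = ρA ⊗ₖ ρB) :
    ∃ G : Matrix (A × B) C ℂ,
      G * Gᴴ = diagonal (fun k => ((hA.eigenvalues k.1 * hB.eigenvalues k.2 : ℝ) : ℂ)) ∧
      redAC ψ = ((hA.eigenvectorUnitary : Matrix A A ℂ) ⊗ₖ (1 : Matrix C C ℂ)) *
        (regroupAC G * (regroupAC G)ᴴ) *
        ((hA.eigenvectorUnitary : Matrix A A ℂ) ⊗ₖ (1 : Matrix C C ℂ))ᴴ := by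
  set U : Matrix A A ℂ := ↑hA.eigenvectorUnitary
  set V : Matrix B B ℂ := ↑hB.eigenvectorUnitary
  have hUV : U ⊗ₖ V ∈ unitary _ := kronecker_mem_unitary (SetLike.coe_mem _) (SetLike.coe_mem _)
  have hVt : Vᵀ * Vᵀᴴ = 1 := by
    rw [← star_eq_conjTranspose]
    exact Unitary.mul_star_self_of_mem
      (transpose_mem_unitaryGroup_iff.mpr (SetLike.coe_mem hB.eigenvectorUnitary))
  have hψG : of (Function.curry ψ) = (U ⊗ₖ V) * ((U ⊗ₖ V)ᴴ * of (Function.curry ψ)) := by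
    rw [← Matrix.mul_assoc, ← star_eq_conjTranspose, Unitary.mul_star_self_of_mem hUV,
      Matrix.one_mul]
  refine ⟨(U ⊗ₖ V)ᴴ * of (Function.curry ψ), ?_, ?_⟩
  · rw [conjTranspose_mul, conjTranspose_conjTranspose, Matrix.mul_assoc,
      ← Matrix.mul_assoc _ _ (U ⊗ₖ V), ← redL_eq_mul_conjTranspose, hψ, conjTranspose_kronecker,
      ← mul_kronecker_mul, ← mul_kronecker_mul, ← Matrix.mul_assoc, ← Matrix.mul_assoc,
      hA.conjTranspose_eigenvectorUnitary_mul_mul, hB.conjTranspose_eigenvectorUnitary_mul_mul,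
      diagonal_kronecker_diagonal]
    simp
  · conv_lhs => rw [redAC_eq_regroupAC_mul_conjTranspose, hψG, regroupAC_kronecker_mul,
      conjTranspose_mul, conjTranspose_mul]
    simp only [Matrix.mul_assoc]
    rw [← Matrix.mul_assoc Vᵀ, hVt, Matrix.one_mul]

section rowsDivSqrt

variable {m n : Type*} [Fintype m] [Fintype n] [DecidableEq m] {G : Matrix m n ℂ} {d : m → ℝ}

/-- For `d k = ‖G k‖²` this normalises the nonzero rows of `G`; zero rows stay zero
since `0⁻¹ = 0`. -/
def rowsDivSqrt (d : m → ℝ) (G : Matrix m n ℂ) : Matrix m n ℂ :=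
  diagonal (fun k => (((√(d k))⁻¹ : ℝ) : ℂ)) * G

theorem mul_conjTranspose_rowsDivSqrt (hG : G * Gᴴ = diagonal fun k => (d k : ℂ)) :
    G * (rowsDivSqrt d G)ᴴ = diagonal fun k => ((√(d k) : ℝ) : ℂ) := by
  rw [rowsDivSqrt, conjTranspose_mul, ← Matrix.mul_assoc, hG, diagonal_conjTranspose,
    diagonal_mul_diagonal]
  congr 1
  ext k
  simp only [Pi.star_apply, Complex.star_def, Complex.conj_ofReal, ← Complex.ofReal_mul,
    ← div_eq_mul_inv, Real.div_sqrt]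

theorem posSemidef_one_sub_rowsDivSqrt_mul_conjTranspose
    (hG : G * Gᴴ = diagonal fun k => (d k : ℂ)) :
    (1 - rowsDivSqrt d G * (rowsDivSqrt d G)ᴴ).PosSemidef := by
  have hassoc : rowsDivSqrt d G * (rowsDivSqrt d G)ᴴ =
      diagonal (fun k => (((√(d k))⁻¹ : ℝ) : ℂ)) * (G * (rowsDivSqrt d G)ᴴ) :=
    Matrix.mul_assoc _ _ _
  rw [hassoc, mul_conjTranspose_rowsDivSqrt hG, diagonal_mul_diagonal, ← diagonal_one,
    diagonal_sub, posSemidef_diagonal_iff]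
  intro k
  rw [← Complex.ofReal_mul, ← Complex.ofReal_one, ← Complex.ofReal_sub, Complex.zero_le_real,
    sub_nonneg]
  rcases eq_or_ne (√(d k)) 0 with h | h <;> simp [h]

end rowsDivSqrt

section hminFeasible

variable {A C : Type*} [Fintype A] [Fintype C] [DecidableEq A]

def hminFeasible (ρ : Matrix (A × C) (A × C) ℂ) : Set ℝ :=
  {l : ℝ | ∃ σ : Matrix C C ℂ, IsDensity σ ∧
    (((2 : ℝ) ^ l : ℝ) • ((1 : Matrix A A ℂ) ⊗ₖ σ) - ρ).PosSemidef}

theorem hminFeasible_unitary_conj [DecidableEq C] {U : Matrix A A ℂ}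
    (hU : U ∈ unitary (Matrix A A ℂ)) (ρ : Matrix (A × C) (A × C) ℂ) :
    hminFeasible ((U ⊗ₖ (1 : Matrix C C ℂ)) * ρ * (U ⊗ₖ (1 : Matrix C C ℂ))ᴴ) =
      hminFeasible ρ := by
  have hW := kronecker_mem_unitary hU (one_mem (unitary (Matrix C C ℂ)))
  have hconj (σ : Matrix C C ℂ) :
      (U ⊗ₖ (1 : Matrix C C ℂ)) * ((1 : Matrix A A ℂ) ⊗ₖ σ) * (U ⊗ₖ (1 : Matrix C C ℂ))ᴴ =
        (1 : Matrix A A ℂ) ⊗ₖ σ := by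
    rw [conjTranspose_kronecker, conjTranspose_one, ← mul_kronecker_mul, ← mul_kronecker_mul,
      Matrix.mul_one, Matrix.one_mul, Matrix.mul_one, ← star_eq_conjTranspose,
      Unitary.mul_star_self_of_mem hU]
  ext l
  refine exists_congr fun σ => and_congr_right fun _ => ?_
  rw [← (Unitary.isUnit_coe (U := ⟨_, hW⟩)).posSemidef_star_right_conjugate_iff
    (x := _ - ρ)]
  simp only [star_eq_conjTranspose, Matrix.mul_sub, Matrix.sub_mul, Matrix.mul_smul,
    Matrix.smul_mul, hconj]

theorem neg_Hmin_eq_sInf [DecidableEq C] (ρ : Matrix (A × C) (A × C) ℂ) :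
    -Hmin ρ = sInf (hminFeasible ρ) :=
  neg_neg _

end hminFeasible

section productPurification

variable {A B C : Type*} [Fintype A] [Fintype B] [Fintype C]
  {G : Matrix (A × B) C ℂ} {p : A → ℝ} {q : B → ℝ}

def optimalState (G : Matrix (A × B) C ℂ) (p : A → ℝ) : Matrix C C ℂ :=
  (∑ a, √(p a))⁻¹ • ∑ a, ∑ b, (√(p a))⁻¹ • vecMulVec (G (a, b)) (star (G (a, b)))

theorem posSemidef_optimalState : (optimalState G p).PosSemidef := by
  refine .smul (posSemidef_sum _ fun a _ => posSemidef_sum _ fun b _ =>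
    (posSemidef_vecMulVec_self_star _).smul (by positivity)) (by positivity)

theorem dotProduct_optimalState_mulVec (y : C → ℂ) :
    star y ⬝ᵥ (optimalState G p *ᵥ y) = (((∑ a, √(p a))⁻¹ *
      ∑ a, ∑ b, (√(p a))⁻¹ * ‖star (G (a, b)) ⬝ᵥ y‖ ^ 2 : ℝ) : ℂ) := by
  simp [optimalState, smul_mulVec, sum_mulVec, dotProduct_sum, dotProduct_smul,
    dotProduct_vecMulVec_star_mulVec, Complex.real_smul]

variable [DecidableEq A] [DecidableEq B]

theorem isDensity_optimalState
    (hG : G * Gᴴ = diagonal fun k => ((p k.1 * q k.2 : ℝ) : ℂ)) (hq1 : ∑ b, q b = 1)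
    (ht : 0 < ∑ a, √(p a)) : IsDensity (optimalState G p) := by
  refine ⟨posSemidef_optimalState, ?_⟩
  have hrow (k : A × B) : (vecMulVec (G k) (star (G k))).trace = ((p k.1 * q k.2 : ℝ) : ℂ) := by
    rw [trace_vecMulVec, ← diagonal_apply_eq (fun k => ((p k.1 * q k.2 : ℝ) : ℂ)) k, ← hG]
    rfl
  have hsum : ∑ a, ∑ b, (√(p a))⁻¹ * (p a * q b) = ∑ a, √(p a) := by
    simp_rw [← mul_assoc, inv_mul_eq_div, Real.div_sqrt, ← Finset.mul_sum, hq1, mul_one]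
  simp only [optimalState, trace_smul, trace_sum, hrow, Complex.real_smul, ← Complex.ofReal_mul,
    ← Complex.ofReal_sum, hsum, inv_mul_cancel₀ ht.ne', Complex.ofReal_one]

theorem posSemidef_sq_smul_one_kronecker_optimalState_sub (hp : ∀ a, 0 ≤ p a)
    (hG : G * Gᴴ = diagonal fun k => ((p k.1 * q k.2 : ℝ) : ℂ)) :
    (((∑ a, √(p a)) ^ 2 : ℝ) • ((1 : Matrix A A ℂ) ⊗ₖ optimalState G p) -
      regroupAC G * (regroupAC G)ᴴ).PosSemidef := by
  have hherm := (((PosSemidef.one (n := A) (R := ℂ)).kronecker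
    (posSemidef_optimalState (G := G) (p := p))).smul (sq_nonneg (∑ a, √(p a)))).isHermitian
  refine .of_dotProduct_mulVec_nonneg (hherm.sub (isHermitian_mul_conjTranspose_self _)) fun x => ?_
  rw [sub_mulVec, dotProduct_sub, smul_mulVec, dotProduct_smul, dotProduct_one_kronecker_mulVec,
    dotProduct_mul_conjTranspose_mulVec, conjTranspose_regroupAC_mulVec,
    star_dotProduct_self_eq_sum_norm_sq]
  simp_rw [dotProduct_optimalState_mulVec]
  rw [Complex.real_smul, ← Complex.ofReal_sum, ← Complex.ofReal_mul, sub_nonneg]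
  refine Complex.real_le_real.mpr ?_
  set t := ∑ a, √(p a)
  set z : A → A → B → ℂ := fun a' a b => star (G (a', b)) ⬝ᵥ fun γ => x (a, γ)
  have hz (a : A) (b : B) (ha : √(p a) = 0) : z a a b = 0 := by
    have hrow : G (a, b) = 0 := eq_zero_of_mul_conjTranspose_self_apply_eq_zero <| by
      simp [hG, Real.sqrt_eq_zero (hp a) |>.mp ha]
    simp [z, hrow]
  calc ∑ b, ‖∑ a, z a a b‖ ^ 2
      ≤ ∑ b, t * ∑ a, ‖z a a b‖ ^ 2 / √(p a) :=
        Finset.sum_le_sum fun b _ => norm_sum_sq_le_sum_mul_sum_sq_div _ _ _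
          (fun a _ => Real.sqrt_nonneg _) fun a _ => hz a b
    _ = t * ∑ a, ∑ b, (√(p a))⁻¹ * ‖z a a b‖ ^ 2 := by
        rw [← Finset.mul_sum, Finset.sum_comm]
        simp_rw [div_eq_inv_mul]
    _ ≤ t * ∑ a, ∑ a', ∑ b, (√(p a'))⁻¹ * ‖z a' a b‖ ^ 2 := by
        gcongr with a
        exact Finset.single_le_sum (f := fun a' => ∑ b, (√(p a'))⁻¹ * ‖z a' a b‖ ^ 2)
          (fun a' _ => by positivity) (Finset.mem_univ a)
    _ = t ^ 2 * ∑ a, t⁻¹ * ∑ a', ∑ b, (√(p a'))⁻¹ * ‖z a' a b‖ ^ 2 := by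
        rw [← Finset.mul_sum]
        rcases eq_or_ne t 0 with ht | ht
        · simp [ht]
        · field_simp

theorem sq_sum_sqrt_le_of_mem_hminFeasible [DecidableEq C] (hp : ∀ a, 0 ≤ p a)
    (hq : ∀ b, 0 ≤ q b) (hq1 : ∑ b, q b = 1)
    (hG : G * Gᴴ = diagonal fun k => ((p k.1 * q k.2 : ℝ) : ℂ)) {l : ℝ}
    (hl : l ∈ hminFeasible (regroupAC G * (regroupAC G)ᴴ)) : (∑ a, √(p a)) ^ 2 ≤ 2 ^ l := by
  obtain ⟨σ, ⟨hσ, hσ1⟩, hX⟩ := hl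
  set t := ∑ a, √(p a)
  set S := regroupAC G
  set Y := regroupAC (rowsDivSqrt (fun k => p k.1 * q k.2) G)
  have hcross : Yᴴ * S = diagonal fun b => ((t * √(q b) : ℝ) : ℂ) := by
    rw [conjTranspose_regroupAC_mul_regroupAC, mul_conjTranspose_rowsDivSqrt hG,
      ptraceA_diagonal, diagonal_transpose]
    congr 1
    ext b
    simp [t, Finset.sum_mul, Real.sqrt_mul (hp _)]
  have hcorr : (Yᴴ * (S * Sᴴ) * Y).trace = ((t ^ 2 : ℝ) : ℂ) := by
    have hfactor : Yᴴ * (S * Sᴴ) * Y = (Yᴴ * S) * (Yᴴ * S)ᴴ := by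
      simp only [conjTranspose_mul, conjTranspose_conjTranspose, Matrix.mul_assoc]
    have hterm (b : B) : t * √(q b) * (t * √(q b)) = t ^ 2 * q b := by
      rw [mul_mul_mul_comm, Real.mul_self_sqrt (hq b), sq]
    rw [hfactor, hcross, diagonal_conjTranspose, diagonal_mul_diagonal, trace_diagonal]
    simp only [Pi.star_apply, Complex.star_def, Complex.conj_ofReal, ← Complex.ofReal_mul, hterm,
      ← Complex.ofReal_sum, ← Finset.mul_sum, hq1, mul_one]
  have hstate : (Yᴴ * ((1 : Matrix A A ℂ) ⊗ₖ σ) * Y).trace ≤ 1 := by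
    rw [Matrix.mul_assoc, ← transpose_transpose σ, ← regroupAC_mul,
      conjTranspose_regroupAC_mul_regroupAC, trace_transpose, trace_ptraceA, ← hσ1,
      ← trace_transpose σ]
    exact trace_mul_mul_conjTranspose_le_trace (posSemidef_one_sub_conjTranspose_mul_self
      (posSemidef_one_sub_rowsDivSqrt_mul_conjTranspose hG)) hσ.transpose
  have hcompress := (hX.conjTranspose_mul_mul_same Y).trace_nonneg
  rw [Matrix.mul_sub, Matrix.sub_mul, Matrix.mul_smul, Matrix.smul_mul, trace_sub, trace_smul,
    hcorr, sub_nonneg] at hcompress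
  suffices ((t ^ 2 : ℝ) : ℂ) ≤ (((2 : ℝ) ^ l : ℝ) : ℂ) by exact_mod_cast this
  calc ((t ^ 2 : ℝ) : ℂ) ≤ ((2 : ℝ) ^ l : ℝ) • (Yᴴ * ((1 : Matrix A A ℂ) ⊗ₖ σ) * Y).trace :=
        hcompress
    _ ≤ ((2 : ℝ) ^ l : ℝ) • 1 := smul_le_smul_of_nonneg_left hstate (by positivity)
    _ = _ := by simp

theorem isLeast_hminFeasible [DecidableEq C] (hp : ∀ a, 0 ≤ p a) (hq : ∀ b, 0 ≤ q b)
    (hq1 : ∑ b, q b = 1) (hG : G * Gᴴ = diagonal fun k => ((p k.1 * q k.2 : ℝ) : ℂ))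
    (ht : 0 < ∑ a, √(p a)) :
    IsLeast (hminFeasible (regroupAC G * (regroupAC G)ᴴ)) (Real.logb 2 ((∑ a, √(p a)) ^ 2)) := by
  refine ⟨⟨optimalState G p, isDensity_optimalState hG hq1 ht, ?_⟩, fun l hl => ?_⟩
  · rw [Real.rpow_logb (by norm_num) (by norm_num) (by positivity)]
    exact posSemidef_sq_smul_one_kronecker_optimalState_sub hp hG
  · exact (Real.logb_le_iff_le_rpow one_lt_two (by positivity)).mpr
      (sq_sum_sqrt_le_of_mem_hminFeasible hp hq hq1 hG hl)

end productPurification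

/-- for a product state `ρ_AB = ρ_A ⊗ ρ_B`,
`H_max(A|B)_ρ = 2 log₂ tr √ρ_A`, where `H_max(A|B) = -H_min(A|C)` is evaluated on any
purification `ψ` of `ρ_A ⊗ ρ_B`. -/
theorem stmt16 {A B : Type*} [Fintype A] [Fintype B] [DecidableEq A] [DecidableEq B]
    (ρA : Matrix A A ℂ) (hA : IsDensity ρA)
    (ρB : Matrix B B ℂ) (hB : IsDensity ρB)
    {C : Type*} [Fintype C] [DecidableEq C]
    (ψ : (A × B) × C → ℂ) (hψ : redL ψ = ρA ⊗ₖ ρB) :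
    -(Hmin (redAC ψ)) = 2 * Real.logb 2 ((psqrt ρA).trace.re) := by
  obtain ⟨G, hG, hρAC⟩ := exists_redAC_eq_of_redL_eq_kronecker hA.1.1 hB.1.1 hψ
  have hmin := isLeast_hminFeasible hA.1.eigenvalues_nonneg hB.1.eigenvalues_nonneg
    hB.sum_eigenvalues hG hA.sum_sqrt_eigenvalues_pos
  rw [neg_Hmin_eq_sInf, hρAC, hminFeasible_unitary_conj (SetLike.coe_mem _), hmin.csInf_eq,
    re_trace_psqrt hA.1, Real.logb_pow]
  push_cast
  ring

end
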